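/- With recursion-free global and local types and projection `project` as above: if `r` is not a participant of `G` (`r ∉ prts G`) and `project G r = some L`, then `L = end`. -/

import Mathlib

open scoped Classical

/-- Recursion-free local session types: `lend`, send to a partner, or receive
from a partner, with a list of `(label, sort, continuation)` branches.
Participants, labels and sorts are drawn from `ℕ`. -/
inductive LType : Type
  | lend : LType
  | lsend : ℕ → List (ℕ × ℕ × LType) → LType
  | lrecv : ℕ → List (ℕ × ℕ × LType) → LType

/-- Recursion-free global session types. -/
inductive GT : Type
  | gend : GT
  | gmsg : ℕ → ℕ → List (ℕ × ℕ × GT) → GT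

mutual
/-- Participants of a recursion-free global type. -/
def prts : GT → Set ℕ
  | .gend => ∅
  | .gmsg p q cs => {p, q} ∪ prtsList cs

def prtsList : List (ℕ × ℕ × GT) → Set ℕ
  | [] => ∅
  | c :: cs => prts c.2.2 ∪ prtsList cs
end

mutual
/-- Partial projection of a recursion-free global type onto a participant. -/
noncomputable def project : GT → ℕ → Option LType
  | .gend, _ => some .lend
  | .gmsg p q cs, r =>
    if r = p then (projectList cs r).map (.lsend q)
    else if r = q then (projectList cs r).map (.lrecv p)
    else projectSame cs r

/-- Project every continuation, failing if any projection fails. -/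
noncomputable def projectList : List (ℕ × ℕ × GT) → ℕ → Option (List (ℕ × ℕ × LType))
  | [], _ => some []
  | c :: cs, r =>
    match project c.2.2 r, projectList cs r with
    | some L, some rest => some ((c.1, c.2.1, L) :: rest)
    | _, _ => none

/-- Project all continuations, defined only when all projections are defined
and equal, in which case it returns the common value. -/
noncomputable def projectSame : List (ℕ × ℕ × GT) → ℕ → Option LType
  | [], _ => none
  | [c], r => project c.2.2 r
  | c :: cs, r =>
    match project c.2.2 r, projectSame cs r with
    | some L, some L' => if L = L' then some L else none
    | _, _ => none
end

/-! A non-participant's projection of `gmsg p q cs` is the common projection of the branches,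
which, when defined, is the projection of the first branch; following first branches
therefore ends at `gend`, whose projection is `lend`. -/

theorem project_gmsg_of_not_mem_prts {p q r : ℕ} {cs : List (ℕ × ℕ × GT)}
    (hr : r ∉ prts (.gmsg p q cs)) : project (.gmsg p q cs) r = projectSame cs r := by
  have hp : r ≠ p := by rintro rfl; simp [prts] at hr
  have hq : r ≠ q := by rintro rfl; simp [prts] at hr
  rw [project, if_neg hp, if_neg hq]

theorem project_eq_of_projectSame_cons_eq_some {c : ℕ × ℕ × GT} {cs : List (ℕ × ℕ × GT)}
    {r : ℕ} {L : LType} (h : projectSame (c :: cs) r = some L) : project c.2.2 r = some L := by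
  cases cs with
  | nil => rwa [projectSame] at h
  | cons c' cs =>
    rw [projectSame] at h
    case x_2 => simp
    cases hc : project c.2.2 r <;> cases htl : projectSame (c' :: cs) r <;>
      simp only [hc, htl, reduceCtorEq] at h
    split_ifs at h
    exact h

theorem project_not_part (G : GT) (r : ℕ) (L : LType)
    (hr : r ∉ prts G) (h : project G r = some L) : L = .lend := by
  match G with
  | .gend => simpa [project] using h.symm
  | .gmsg p q [] => simp [project_gmsg_of_not_mem_prts hr, projectSame] at h
  | .gmsg p q ((_, _, G') :: cs) =>
    rw [project_gmsg_of_not_mem_prts hr] at h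
    exact project_not_part G' r L (fun hG' => hr (by simp [prts, prtsList, hG']))
      (project_eq_of_projectSame_cons_eq_some h)
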